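/- The generalized Galois numbers G_n^{(m)} = Σ_{k_1+···+k_m = n} C(n; k_1,...,k_m)_q satisfy, for n ≥ m-1, the recursion G_{n+1}^{(m)} = Σ_{i=0}^{m-1} binom(m, i+1) (-1)^i ((q)_n/(q)_{n-i}) G_{n-i}^{(m)}, where binom(m, i+1) is the ordinary binomial coefficient. -/

import Mathlib

/-- `(q)_n = (1-q)(1-q^2)⋯(1-q^n)`, with `(q)_0 = 1`. -/
noncomputable def qPoch {K : Type*} [Field K] (q : K) (n : ℕ) : K :=
  ∏ j ∈ Finset.range n, (1 - q ^ (j + 1))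

/-- The generalized Galois number `G_n^{(m)} = Σ_{k_1+⋯+k_m=n} C(n; k_1,…,k_m)_q`. -/
noncomputable def genGaloisNumber {K : Type*} [Field K] (q : K) (m n : ℕ) : K :=
  ∑ k ∈ Finset.Nat.antidiagonalTuple m n, qPoch q n / ∏ i, qPoch q (k i)

/-! With `E(x) = Σ_k x^k / (q)_k` one has `G_N^{(m)} = (q)_N · [x^N] E(x)^m`. The functional
equation `E(qx) = (1 - x) E(x)` gives `E(qx)^m = (1 - x)^m E(x)^m`; comparing the coefficients of
`x^(n+1)` on both sides and expanding `(1 - x)^m` binomially yields the recursion. -/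

open Finset PowerSeries

lemma PowerSeries.coeff_pow_eq_sum_antidiagonalTuple {R : Type*} [CommSemiring R] (φ : R⟦X⟧)
    (k n : ℕ) : coeff n (φ ^ k) = ∑ l ∈ Nat.antidiagonalTuple k n, ∏ i, coeff (l i) φ := by
  classical
  rw [show φ ^ k = ∏ _i : Fin k, φ by simp, coeff_prod, finsuppAntidiag, sum_map,
    ← piAntidiag_univ_fin_eq_antidiagonalTuple]
  exact sum_attach (piAntidiag univ n) fun l ↦ ∏ i, coeff (l i) φ

lemma PowerSeries.coeff_one_sub_X_pow_mul {R : Type*} [CommRing R] (φ : R⟦X⟧) {m d : ℕ}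
    (h : m ≤ d) :
    coeff d ((1 - X) ^ m * φ) = ∑ a ∈ range (m + 1), (-1) ^ a * m.choose a * coeff (d - a) φ := by
  rw [← neg_add_eq_sub, add_pow, sum_mul, map_sum]
  refine sum_congr rfl fun a ha ↦ ?_
  have hterm : (-X : R⟦X⟧) ^ a * 1 ^ (m - a) * (m.choose a : R⟦X⟧) =
      C ((-1) ^ a * (m.choose a : R)) * X ^ a := by
    rw [map_mul, map_pow, map_neg, map_one, map_natCast, neg_pow, one_pow, mul_one]
    ring
  have hle : a ≤ d := by grind
  rw [hterm, mul_assoc, coeff_C_mul, coeff_X_pow_mul', if_pos hle]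

section

variable {K : Type*} [Field K] {q : K}

lemma qPoch_succ (q : K) (n : ℕ) : qPoch q (n + 1) = qPoch q n * (1 - q ^ (n + 1)) :=
  prod_range_succ _ n

lemma qPoch_ne_zero (hq : ∀ j, q ^ (j + 1) ≠ 1) (n : ℕ) : qPoch q n ≠ 0 :=
  prod_ne_zero_iff.2 fun j _ ↦ sub_ne_zero.2 (hq j).symm

variable (q) in
noncomputable def qExp : K⟦X⟧ := mk fun k ↦ (qPoch q k)⁻¹

lemma rescale_qExp (hq : ∀ n, qPoch q n ≠ 0) : rescale q (qExp q) = (1 - X) * qExp q := by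
  ext (_ | n)
  · simp [qExp, qPoch]
  · have h := hq (n + 1)
    rw [qPoch_succ] at h
    have h₁ : 1 - q ^ (n + 1) ≠ 0 := right_ne_zero_of_mul h
    have h₀ : qPoch q n ≠ 0 := left_ne_zero_of_mul h
    simp only [coeff_rescale, qExp, coeff_mk, sub_mul, one_mul, map_sub, coeff_succ_X_mul,
      qPoch_succ]
    field_simp
    ring

lemma genGaloisNumber_eq_qPoch_mul_coeff (q : K) (m n : ℕ) :
    genGaloisNumber q m n = qPoch q n * coeff n (qExp q ^ m) := by
  simp only [genGaloisNumber, coeff_pow_eq_sum_antidiagonalTuple, mul_sum, qExp, coeff_mk,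
    div_eq_mul_inv, prod_inv_distrib]

lemma one_sub_pow_mul_coeff_qExp_pow (hq : ∀ n, qPoch q n ≠ 0) {m n : ℕ} (hmn : m ≤ n + 1) :
    (1 - q ^ (n + 1)) * coeff (n + 1) (qExp q ^ m) =
      ∑ i ∈ range m, (-1) ^ i * m.choose (i + 1) * coeff (n - i) (qExp q ^ m) := by
  have h := congrArg (coeff (n + 1)) (show rescale q (qExp q ^ m) = (1 - X) ^ m * qExp q ^ m by
    rw [map_pow, rescale_qExp hq, mul_pow])
  rw [coeff_rescale, coeff_one_sub_X_pow_mul _ hmn, sum_range_succ'] at h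
  simp only [pow_succ, mul_neg_one, neg_mul, sum_neg_distrib, Nat.add_sub_add_right, pow_zero,
    Nat.choose_zero_right, Nat.cast_one, one_mul, Nat.sub_zero] at h
  linear_combination -h

lemma genGaloisNumber_succ (hq : ∀ n, qPoch q n ≠ 0) {m n : ℕ} (hmn : m ≤ n + 1) :
    genGaloisNumber q m (n + 1) =
      ∑ i ∈ range m, (m.choose (i + 1) : K) * (-1) ^ i * (qPoch q n / qPoch q (n - i)) *
        genGaloisNumber q m (n - i) := by
  simp only [genGaloisNumber_eq_qPoch_mul_coeff]
  rw [qPoch_succ, mul_assoc, one_sub_pow_mul_coeff_qExp_pow hq hmn, mul_sum]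
  refine sum_congr rfl fun i _ ↦ ?_
  have := hq (n - i)
  field_simp

end

lemma RatFunc.X_pow_succ_ne_one {K : Type*} [Field K] (j : ℕ) :
    (RatFunc.X : RatFunc K) ^ (j + 1) ≠ 1 := by
  intro h
  have := congrArg intDegree h
  rw [← algebraMap_X, ← map_pow, intDegree_polynomial, intDegree_one] at this
  simp at this
  omega

theorem genGaloisNumber_recursion_general (m n : ℕ) (hn : m - 1 ≤ n) :
    genGaloisNumber (RatFunc.X : RatFunc ℚ) m (n + 1) =
      ∑ i ∈ Finset.range m,
        (m.choose (i + 1) : RatFunc ℚ) * (-1 : RatFunc ℚ) ^ i *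
          (qPoch (RatFunc.X : RatFunc ℚ) n / qPoch (RatFunc.X : RatFunc ℚ) (n - i)) *
          genGaloisNumber (RatFunc.X : RatFunc ℚ) m (n - i) :=
  genGaloisNumber_succ (qPoch_ne_zero RatFunc.X_pow_succ_ne_one) (by omega)

/-- `G_{n+1}^{(m)} = Σ_{i=0}^{m-1} binom(m,i+1) (-1)^i ((q)_n/(q)_{n-i}) G_{n-i}^{(m)}`
for `n ≥ m-1`. -/
theorem genGaloisNumber_recursion (m n : ℕ) (hm : 2 ≤ m) (hn : m - 1 ≤ n) :
    genGaloisNumber (RatFunc.X : RatFunc ℚ) m (n + 1) =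
      ∑ i ∈ Finset.range m,
        (m.choose (i + 1) : RatFunc ℚ) * (-1 : RatFunc ℚ) ^ i *
          (qPoch (RatFunc.X : RatFunc ℚ) n / qPoch (RatFunc.X : RatFunc ℚ) (n - i)) *
          genGaloisNumber (RatFunc.X : RatFunc ℚ) m (n - i) :=
  genGaloisNumber_recursion_general m n hn
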